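/- arXiv:1209.1216 — 2 statements merged into one kernel-verified Lean document; each statement's English description precedes it below -/
import Mathlib

section
/- There exists a sequence {a_n}_{n∈ℤ₊} of complex numbers such that for every continuous function f : 𝕋 → ℂ on the unit circle 𝕋 = {z ∈ ℂ : |z| = 1}, there is a strictly increasing sequence {n_k} of positive integers with ∑_{j=0}^{n_k} a_j z^j → f(z) as k → ∞ for every z ∈ 𝕋. -/
/-!
Remove from 𝕋 a small open arc around a point `w_m`, with `w_m → 1` and arcs shrinking so that
every point of 𝕋 lies in the remaining compact set `K_m` for all large `m`. Since `0` lies in the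
unbounded component of `ℂ \ K_m`, the coordinate `z` is invertible in the uniform closure of the
polynomials on `K_m`; as `z̄ = z⁻¹` on 𝕋, Stone–Weierstrass makes polynomials dense in `C(K_m)`.
Fix a dense sequence in `C(𝕋)`, repeated so that each term recurs infinitely often, and build the
series block by block: the `m`-th block `z^d q(z)` (with `d` beyond all earlier degrees) is chosen
so that the partial sum approximates the `m`-th target within `1/(m+1)` on `K_m`, which is possible
because `(g - s) z̄^d` is again continuous on 𝕋. Given `f`, follow the blocks whose targets tend
to `f`.
-/

open Polynomial Finset Metric Set Filter Topology

namespace BlockSums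

variable {R : Type*} [Semiring R] (q : ℕ → R[X] → ℕ → R[X])

/-- The `m`-th partial sum `P m` of the series, paired with a bound `d m` on its degree. -/
noncomputable def blocks : ℕ → R[X] × ℕ
  | 0 => (0, 0)
  | m + 1 =>
    let (P, d) := blocks m
    (P + X ^ (d + 1) * q m P (d + 1), d + 1 + (q m P (d + 1)).natDegree)

lemma blocks_succ (m : ℕ) : blocks q (m + 1) =
    ((blocks q m).1 + X ^ ((blocks q m).2 + 1) * q m (blocks q m).1 ((blocks q m).2 + 1),
      (blocks q m).2 + 1 + (q m (blocks q m).1 ((blocks q m).2 + 1)).natDegree) := rfl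

lemma natDegree_blocks_fst_le (m : ℕ) : (blocks q m).1.natDegree ≤ (blocks q m).2 := by
  induction m with
  | zero => simp [blocks]
  | succ m ih =>
    rw [blocks_succ]
    refine (natDegree_add_le _ _).trans (max_le (by omega) ?_)
    exact natDegree_mul_le.trans (by grw [natDegree_X_pow_le])

lemma strictMono_blocks_snd : StrictMono fun m => (blocks q m).2 :=
  strictMono_nat_of_lt_succ fun m => by rw [blocks_succ]; omega

lemma coeff_blocks_fst_of_le {m M j : ℕ} (hmM : m ≤ M) (hj : j ≤ (blocks q m).2) :
    (blocks q M).1.coeff j = (blocks q m).1.coeff j := by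
  induction M, hmM using Nat.le_induction with
  | base => rfl
  | succ M hmM ih =>
    have := (strictMono_blocks_snd q).monotone hmM
    rw [blocks_succ, coeff_add, coeff_X_pow_mul', if_neg (by omega), add_zero, ih]

lemma blocks_fst_eq_sum (m : ℕ) : (blocks q (m + 1)).1 =
    ∑ j ∈ range ((blocks q (m + 1)).2 + 1), C ((blocks q (j + 1)).1.coeff j) * X ^ j := by
  have hd := strictMono_blocks_snd q
  rw [as_sum_range_C_mul_X_pow' _ (Nat.lt_succ_of_le (natDegree_blocks_fst_le q _))]
  refine sum_congr rfl fun j hj => ?_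
  rw [Finset.mem_range, Nat.lt_succ_iff] at hj
  rcases le_total (j + 1) (m + 1) with hjm | hmj
  · rw [coeff_blocks_fst_of_le q hjm (Nat.le_of_succ_le (hd.id_le (j + 1)))]
  · rw [coeff_blocks_fst_of_le q hmj hj]

end BlockSums

open BlockSums in
theorem exists_partialSums_of_forall_exists_add_X_pow_mul {R : Type*} [Semiring R]
    (good : ℕ → R[X] → Prop) (h : ∀ m s N, ∃ q, good m (s + X ^ N * q)) :
    ∃ a : ℕ → R, ∃ n : ℕ → ℕ, StrictMono n ∧ (∀ m, m < n m) ∧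
      ∀ m, good m (∑ j ∈ range (n m + 1), C (a j) * X ^ j) := by
  choose q hq using h
  have hd := strictMono_blocks_snd q
  refine ⟨fun j => (blocks q (j + 1)).1.coeff j, fun m => (blocks q (m + 1)).2,
    fun m n hmn => hd (Nat.succ_lt_succ hmn), fun m => hd.id_le (m + 1), fun m => ?_⟩
  rw [← blocks_fst_eq_sum]
  exact hq _ _ _

theorem star_X_mem_topologicalClosure_polynomialFunctions {K : Set ℂ} [CompactSpace K]
    (hK : K ⊆ sphere 0 1) (h0 : ¬ Bornology.IsBounded (connectedComponentIn Kᶜ 0)) :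
    star (toContinuousMapOnAlgHom K X) ∈ (polynomialFunctions K).topologicalClosure := by
  set A := (polynomialFunctions K).topologicalClosure
  have : IsClosed (A : Set C(K, ℂ)) := (polynomialFunctions K).isClosed_topologicalClosure
  set ι := toContinuousMapOnAlgHom K X
  have hι : ι ∈ A := (polynomialFunctions K).le_topologicalClosure ⟨X, trivial, rfl⟩
  have hσ : spectrum ℂ ι = K := by
    rw [ContinuousMap.spectrum_eq_range]; ext; simp [ι]
  -- The spectrum of `ι` in `A` is `K` plus some bounded components of `Kᶜ`, so it misses `0`.
  have hunit : IsUnit (⟨ι, hι⟩ : A) := by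
    have h : (0 : ℂ) ∉ spectrum ℂ (⟨ι, hι⟩ : A) := fun h => h0 <| by
      simpa [hσ] using Subalgebra.spectrum_isBounded_connectedComponentIn A _ h
    simpa using (spectrum.notMem_iff.mp h).neg
  obtain ⟨v, hv⟩ := hunit.exists_left_inv
  convert v.2
  ext z
  have hz : ‖(z : ℂ)‖ = 1 := by simpa using hK z.2
  have hz0 : (z : ℂ) ≠ 0 := by rintro h; simp [h] at hz
  have hvz : (v : C(K, ℂ)) z * z = 1 := by simpa [ι] using congr(($hv : C(K, ℂ)) z)
  have hconj : (starRingEnd ℂ) z * z = 1 := by rw [Complex.conj_mul', hz]; simp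
  simpa [ι] using mul_right_cancel₀ hz0 (hconj.trans hvz.symm)

theorem polynomialFunctions_topologicalClosure_eq_top_of_subset_sphere {K : Set ℂ}
    [CompactSpace K] (hK : K ⊆ sphere 0 1)
    (h0 : ¬ Bornology.IsBounded (connectedComponentIn Kᶜ 0)) :
    (polynomialFunctions K).topologicalClosure = ⊤ := by
  set A := (polynomialFunctions K).topologicalClosure
  have hle : ((polynomialFunctions K).starClosure : Set C(K, ℂ)) ⊆ A := by
    rw [polynomialFunctions.starClosure_eq_adjoin_X, ← StarSubalgebra.coe_toSubalgebra,
      StarAlgebra.adjoin_toSubalgebra, SetLike.coe_subset_coe, Algebra.adjoin_le_iff,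
      Set.star_singleton, Set.singleton_union, Set.insert_subset_iff, Set.singleton_subset_iff]
    exact ⟨(polynomialFunctions K).le_topologicalClosure ⟨X, trivial, rfl⟩,
      star_X_mem_topologicalClosure_polynomialFunctions hK h0⟩
  refine eq_top_iff.2 fun f _ =>
    closure_minimal hle (polynomialFunctions K).isClosed_topologicalClosure ?_
  rw [← StarSubalgebra.topologicalClosure_coe, polynomialFunctions.starClosure_topologicalClosure]
  trivial

theorem exists_polynomial_norm_sub_lt {K : Set ℂ} [CompactSpace K] (hK : K ⊆ sphere 0 1)
    (h0 : ¬ Bornology.IsBounded (connectedComponentIn Kᶜ 0)) (f : C(sphere (0 : ℂ) 1, ℂ))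
    {ε : ℝ} (hε : 0 < ε) :
    ∃ p : ℂ[X], ∀ z : sphere (0 : ℂ) 1, (z : ℂ) ∈ K → ‖p.eval (z : ℂ) - f z‖ < ε := by
  let g : C(K, ℂ) := f.comp ⟨fun z => ⟨z, hK z.2⟩, by fun_prop⟩
  have hg : g ∈ closure (polynomialFunctions K : Set C(K, ℂ)) := by
    rw [← Subalgebra.topologicalClosure_coe,
      polynomialFunctions_topologicalClosure_eq_top_of_subset_sphere hK h0]
    trivial
  obtain ⟨_, ⟨p, -, rfl⟩, hp⟩ := Metric.mem_closure_iff.1 hg ε hε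
  refine ⟨p, fun z hz => ?_⟩
  rw [← dist_eq_norm, dist_comm]
  exact (ContinuousMap.dist_apply_le_dist ⟨z, hz⟩).trans_lt hp

theorem exists_add_X_pow_mul_norm_sub_lt {K : Set ℂ} [CompactSpace K] (hK : K ⊆ sphere 0 1)
    (h0 : ¬ Bornology.IsBounded (connectedComponentIn Kᶜ 0)) (f : C(sphere (0 : ℂ) 1, ℂ))
    {ε : ℝ} (hε : 0 < ε) (s : ℂ[X]) (N : ℕ) :
    ∃ q : ℂ[X], ∀ z : sphere (0 : ℂ) 1, (z : ℂ) ∈ K →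
      ‖(s + X ^ N * q).eval (z : ℂ) - f z‖ < ε := by
  let F : C(sphere (0 : ℂ) 1, ℂ) :=
    ⟨fun z => (f z - s.eval (z : ℂ)) * star (z : ℂ) ^ N, by fun_prop⟩
  obtain ⟨q, hq⟩ := exists_polynomial_norm_sub_lt hK h0 F hε
  refine ⟨q, fun z hz => ?_⟩
  have hz1 : ‖(z : ℂ)‖ = 1 := by simp
  have hzN : (z : ℂ) ^ N * star (z : ℂ) ^ N = 1 := by
    rw [← mul_pow, Complex.star_def, Complex.mul_conj', hz1]; simp
  have key : (s + X ^ N * q).eval (z : ℂ) - f z = (z : ℂ) ^ N * (q.eval (z : ℂ) - F z) := by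
    simp only [eval_add, eval_mul, eval_pow, eval_X, F, ContinuousMap.coe_mk]
    linear_combination (f z - s.eval (z : ℂ)) * hzN
  rw [key, norm_mul, norm_pow, hz1, one_pow, one_mul]
  exact hq z hz

theorem not_isBounded_connectedComponentIn_compl_sphere_sdiff_ball {w : ℂ} (hw : ‖w‖ = 1)
    {δ : ℝ} (hδ : 0 < δ) :
    ¬ Bornology.IsBounded (connectedComponentIn (sphere 0 1 \ ball w δ)ᶜ 0) := by
  set ray := (fun t : ℝ => (t : ℂ) * w) '' Ici 0
  have hray : ray ⊆ connectedComponentIn (sphere 0 1 \ ball w δ)ᶜ 0 := by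
    refine (isPreconnected_Ici.image _
      (Complex.continuous_ofReal.mul continuous_const).continuousOn).subset_connectedComponentIn
      ⟨0, self_mem_Ici, by simp⟩ ?_
    rintro _ ⟨t, ht, rfl⟩ ⟨hsph, hball⟩
    have ht1 : t = 1 := by simpa [norm_mul, hw, abs_of_nonneg (mem_Ici.1 ht)] using hsph
    exact hball (by simp [ht1, hδ])
  intro hb
  obtain ⟨r, hr⟩ := (hb.subset hray).subset_closedBall 0
  have := hr ⟨|r| + 1, mem_Ici.2 (by positivity), rfl⟩
  simp only [mem_closedBall, dist_zero_right, norm_mul, hw, mul_one, Complex.norm_real,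
    Real.norm_eq_abs] at this
  linarith [le_abs_self (|r| + 1), le_abs_self r]

instance compactSpace_sphere_sdiff_ball (w : ℂ) (δ : ℝ) :
    CompactSpace (sphere (0 : ℂ) 1 \ ball w δ : Set ℂ) :=
  isCompact_iff_compactSpace.1 ((isCompact_sphere 0 1).diff isOpen_ball)

theorem eventually_dist_div_two_le {α : Type*} [MetricSpace α] {w : ℕ → α} {c : α}
    (hw : Tendsto w atTop (𝓝 c)) (x : α) : ∀ᶠ m in atTop, dist (w m) c / 2 ≤ dist x (w m) := by
  by_cases hx : x = c
  · subst hx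
    exact Eventually.of_forall fun m => by rw [dist_comm]; exact half_le_self dist_nonneg
  have hdist : Tendsto (fun m => dist x (w m)) atTop (𝓝 (dist x c)) := tendsto_const_nhds.dist hw
  have hrad : Tendsto (fun m => dist (w m) c / 2) atTop (𝓝 0) := by
    simpa using (tendsto_iff_dist_tendsto_zero.1 hw).div_const 2
  filter_upwards [hrad.eventually_lt hdist (dist_pos.2 hx)] with m hm using hm.le

theorem exists_seq_sphere_ne_one_tendsto_one :
    ∃ w : ℕ → ℂ, (∀ m, ‖w m‖ = 1 ∧ w m ≠ 1) ∧ Tendsto w atTop (𝓝 1) := by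
  refine ⟨fun m => Complex.exp (Complex.I * (1 / ((m : ℝ) + 1) : ℝ)), fun m => ⟨?_, ?_⟩, ?_⟩
  · exact Complex.norm_exp_I_mul_ofReal _
  · rw [Ne, ← sub_eq_zero, ← norm_eq_zero, Complex.norm_exp_I_mul_ofReal_sub_one]
    have : 0 < Real.sin (1 / ((m : ℝ) + 1) / 2) := by
      apply Real.sin_pos_of_pos_of_lt_pi (by positivity)
      have : 1 / ((m : ℝ) + 1) ≤ 1 := by
        rw [div_le_one (by positivity)]; linarith [m.cast_nonneg (α := ℝ)]
      linarith [Real.pi_gt_three]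
    exact norm_ne_zero_iff.2 (mul_ne_zero two_ne_zero this.ne')
  · have hexp : Continuous fun t : ℝ => Complex.exp (Complex.I * t) := by fun_prop
    simpa [Function.comp_def] using (hexp.tendsto 0).comp tendsto_one_div_add_atTop_nhds_zero_nat

theorem exists_seq_eventually_notMem_ball :
    ∃ (w : ℕ → ℂ) (δ : ℕ → ℝ), (∀ m, ‖w m‖ = 1 ∧ 0 < δ m) ∧
      ∀ z : ℂ, ∀ᶠ m in atTop, z ∉ ball (w m) (δ m) := by
  obtain ⟨w, hw, hlim⟩ := exists_seq_sphere_ne_one_tendsto_one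
  refine ⟨w, fun m => dist (w m) 1 / 2,
    fun m => ⟨(hw m).1, half_pos (dist_pos.2 (hw m).2)⟩, fun z => ?_⟩
  filter_upwards [eventually_dist_div_two_le hlim z] with m hm
  simpa [mem_ball] using hm

theorem mapClusterPt_comp_unpair_fst {α : Type*} [TopologicalSpace α] {u : ℕ → α}
    (hu : DenseRange u) (x : α) : MapClusterPt x atTop fun m => u (Nat.unpair m).1 := by
  refine mapClusterPt_iff_frequently.2 fun s hs => frequently_atTop.2 fun N => ?_
  obtain ⟨i, hi⟩ := hu.exists_mem_open isOpen_interior ⟨x, mem_interior_iff_mem_nhds.2 hs⟩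
  exact ⟨Nat.pair i N, Nat.right_le_pair i N, by simpa using interior_subset hi⟩

theorem stmt_5 :
    ∃ a : ℕ → ℂ, ∀ f : C(Metric.sphere (0 : ℂ) 1, ℂ),
      ∃ n : ℕ → ℕ, StrictMono n ∧ (∀ k, 0 < n k) ∧
        ∀ z : Metric.sphere (0 : ℂ) 1,
          Tendsto (fun k : ℕ => ∑ j ∈ Finset.range (n k + 1), a j * (z : ℂ) ^ j)
            atTop (nhds (f z)) := by
  obtain ⟨w, δ, hwδ, hev⟩ := exists_seq_eventually_notMem_ball
  obtain ⟨u, hu⟩ := TopologicalSpace.exists_dense_seq C(sphere (0 : ℂ) 1, ℂ)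
  obtain ⟨a, n, hn, hn_gt, happrox⟩ := exists_partialSums_of_forall_exists_add_X_pow_mul
    (fun m p => ∀ z : sphere (0 : ℂ) 1, (z : ℂ) ∈ sphere 0 1 \ ball (w m) (δ m) →
      ‖p.eval (z : ℂ) - u (Nat.unpair m).1 z‖ < 1 / ((m : ℝ) + 1))
    fun m => exists_add_X_pow_mul_norm_sub_lt sdiff_subset
      (not_isBounded_connectedComponentIn_compl_sphere_sdiff_ball (hwδ m).1 (hwδ m).2) _
      Nat.one_div_pos_of_nat
  refine ⟨a, fun f => ?_⟩
  obtain ⟨φ, hφ, hlim⟩ := (mapClusterPt_comp_unpair_fst hu f).tendsto_subseq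
  refine ⟨n ∘ φ, hn.comp hφ, fun k => (Nat.zero_le _).trans_lt (hn_gt _), fun z => ?_⟩
  have herr : Tendsto (fun m => dist (u (Nat.unpair m).1 z)
      (∑ j ∈ range (n m + 1), a j * (z : ℂ) ^ j)) atTop (𝓝 0) := by
    refine squeeze_zero' (Eventually.of_forall fun m => dist_nonneg) ?_
      tendsto_one_div_add_atTop_nhds_zero_nat
    filter_upwards [hev z] with m hm
    simpa [dist_eq_norm', eval_finsetSum] using (happrox m z ⟨z.2, hm⟩).le
  exact (((continuous_eval_const z).tendsto f).comp hlim).congr_dist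
    (herr.comp hφ.tendsto_atTop)
end

section
/- Let X be a metrizable topological vector space and A a linear subspace of ℂ^ℤ with its own complete metrizable vector topology, finer than the topology inherited from ℂ^ℤ (with the product topology), such that φ(ℤ) (finitely supported sequences) is dense in A. Let S : φ(ℤ) → X be linear such that S(U ∩ φ(ℤ)) is dense in X for every neighborhood U of 0 in A. Then there exists a ∈ A such that the symmetric partial sums ∑_{j=−n}^n a_j S(e_j) form a sequence whose set of values is dense in X; moreover, the set of such a is a dense G_δ subset of A. -/
/-!
Write `T n a` for the `n`-th symmetric partial sum. Since `S(φ(ℤ))` is dense, `X` is separable and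
hence second countable; for a countable basis `(V_k)` the set of good `a` is
`⋂ k, ⋃ n, T n ⁻¹' V_k`, a `G_δ`. By Baire it is dense once each `⋃ n, T n ⁻¹' V` is dense: any open
`W ⊆ A` contains a finitely supported `y`, the hypothesis on `S` gives a finitely supported `x`
with `y + x ∈ W` and `S (y + x) ∈ V`, and `T n (y + x) = S (y + x)` as soon as `[-n, n]` covers
the support of `y + x`.
-/

open Set Topology TopologicalSpace

section DenseOrbit

variable {A X : Type*} [TopologicalSpace X]

theorem setOf_dense_range_eq_biInter {B : Set (Set X)} (hB : IsTopologicalBasis B)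
    (T : ℕ → A → X) :
    {a | Dense (range fun n => T n a)} = ⋂ V ∈ {V ∈ B | V.Nonempty}, ⋃ n, T n ⁻¹' V := by
  ext a
  simp only [mem_ofPred_eq, hB.dense_iff, mem_iInter, and_imp, mem_iUnion, mem_preimage,
    inter_comm _ (range _), inter_nonempty, exists_range_iff]

variable [TopologicalSpace A] [SecondCountableTopology X] {T : ℕ → A → X}

theorem isGδ_setOf_dense_range (hT : ∀ n, Continuous (T n)) :
    IsGδ {a | Dense (range fun n => T n a)} := by
  rw [setOf_dense_range_eq_biInter (isBasis_countableBasis X)]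
  refine .biInter ((countable_countableBasis X).mono (sep_subset _ _)) fun V hV => ?_
  exact (isOpen_iUnion fun n => (isOpen_of_mem_countableBasis hV.1).preimage (hT n)).isGδ

theorem dense_setOf_dense_range [BaireSpace A] (hT : ∀ n, Continuous (T n))
    (hdense : ∀ V : Set X, IsOpen V → V.Nonempty → Dense (⋃ n, T n ⁻¹' V)) :
    Dense {a | Dense (range fun n => T n a)} := by
  rw [setOf_dense_range_eq_biInter (isBasis_countableBasis X)]
  refine dense_biInter_of_isOpen (fun V hV => ?_)
    ((countable_countableBasis X).mono (sep_subset _ _))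
    fun V hV => hdense _ (isOpen_of_mem_countableBasis hV.1) hV.2
  exact isOpen_iUnion fun n => (isOpen_of_mem_countableBasis hV.1).preimage (hT n)

end DenseOrbit

theorem dense_iUnion_preimage_of_dense_image_nhds_zero {F A X : Type*} [AddMonoid F]
    [AddMonoid A] [TopologicalSpace A] [ContinuousAdd A]
    [AddGroup X] [TopologicalSpace X] [ContinuousAdd X]
    (e : F →+ A) (S : F →+ X) {T : ℕ → A → X} (hTe : ∀ x, ∃ n, T n (e x) = S x)
    (he : Dense (range e)) (hS : ∀ U ∈ 𝓝 (0 : A), Dense (S '' {x | e x ∈ U}))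
    {V : Set X} (hV : IsOpen V) (hVne : V.Nonempty) : Dense (⋃ n, T n ⁻¹' V) := by
  refine dense_iff_inter_open.2 fun W hW hWne => ?_
  obtain ⟨_, ⟨y, rfl⟩, hyW⟩ := he.exists_mem_open hW hWne
  have hU : (e y + ·) ⁻¹' W ∈ 𝓝 (0 : A) :=
    (hW.preimage (continuous_const.add continuous_id)).mem_nhds (by simpa using hyW)
  obtain ⟨v, hv⟩ := hVne
  have hV' : IsOpen ((S y + ·) ⁻¹' V) := hV.preimage (continuous_const.add continuous_id)
  obtain ⟨_, ⟨x, hxU, rfl⟩, hxV⟩ :=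
    (hS _ hU).exists_mem_open hV' ⟨-S y + v, by simpa using hv⟩
  obtain ⟨n, hn⟩ := hTe (y + x)
  refine ⟨e (y + x), by simpa using hxU, mem_iUnion.2 ⟨n, ?_⟩⟩
  rw [mem_preimage, hn, map_add]
  exact hxV

theorem Finsupp.linearCombination_map_single_one {ι R M : Type*} [CommSemiring R]
    [AddCommMonoid M] [Module R M] (S : (ι →₀ R) →ₗ[R] M) :
    linearCombination R (fun i => S (single i 1)) = S := by
  ext
  simp

theorem separableSpace_of_dense_range_finsupp {ι R M : Type*} [Countable ι] [CommSemiring R]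
    [TopologicalSpace R] [SeparableSpace R] [AddCommMonoid M] [Module R M] [TopologicalSpace M]
    [ContinuousAdd M] [ContinuousSMul R M] (S : (ι →₀ R) →ₗ[R] M) (hS : Dense (range S)) :
    SeparableSpace M := by
  have hspan : (Submodule.span R (range fun i => S (Finsupp.single i 1)) : Set M) = range S := by
    rw [← Finsupp.range_linearCombination, LinearMap.coe_range,
      Finsupp.linearCombination_map_single_one]
  refine isSeparable_univ_iff.1 ?_
  have hsep := ((countable_range fun i => S (Finsupp.single i 1)).isSeparable.span (R := R)).closure
  simpa [hspan, hS.closure_eq] using hsep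

theorem secondCountableTopology_of_separableSpace (X : Type*) [TopologicalSpace X]
    [PseudoMetrizableSpace X] [SeparableSpace X] : SecondCountableTopology X :=
  letI := pseudoMetrizableSpaceUniformity X
  have := pseudoMetrizableSpaceUniformity_countably_generated X
  UniformSpace.secondCountable_of_separable X

theorem Finsupp.exists_support_subset_Icc_neg {M : Type*} [Zero M] (x : ℤ →₀ M) :
    ∃ n : ℕ, x.support ⊆ Finset.Icc (-(n : ℤ)) n := by
  refine ⟨x.support.sup Int.natAbs, fun j hj => ?_⟩
  have := Finset.le_sup (f := Int.natAbs) hj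
  simp only [Finset.mem_Icc]
  omega

section SymmPartialSum

variable {R M : Type*} [CommSemiring R] [AddCommMonoid M] [Module R M]

noncomputable def symmPartialSum (S : (ℤ →₀ R) →ₗ[R] M) (n : ℕ) (c : ℤ → R) : M :=
  ∑ j ∈ Finset.Icc (-(n : ℤ)) n, c j • S (Finsupp.single j 1)

theorem continuous_symmPartialSum [TopologicalSpace R] [TopologicalSpace M] [ContinuousAdd M]
    [ContinuousSMul R M] (S : (ℤ →₀ R) →ₗ[R] M) (n : ℕ) : Continuous (symmPartialSum S n) :=
  continuous_finsetSum _ fun j _ => (continuous_apply j).smul continuous_const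

theorem exists_symmPartialSum_eq (S : (ℤ →₀ R) →ₗ[R] M) (x : ℤ →₀ R) :
    ∃ n, symmPartialSum S n x = S x := by
  obtain ⟨n, hn⟩ := x.exists_support_subset_Icc_neg
  refine ⟨n, ?_⟩
  rw [symmPartialSum, ← Finsupp.linearCombination_apply_of_mem_supported R
    ((Finsupp.mem_supported R x).2 (by exact_mod_cast hn)),
    Finsupp.linearCombination_map_single_one]

end SymmPartialSum

theorem stmt_10_general {X : Type*} [AddCommGroup X] [Module ℂ X] [TopologicalSpace X]
    [IsTopologicalAddGroup X] [ContinuousSMul ℂ X] [TopologicalSpace.MetrizableSpace X]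
    {A : Type*} [AddCommGroup A] [Module ℂ A] [UniformSpace A] [IsUniformAddGroup A]
    [CompleteSpace A] [TopologicalSpace.MetrizableSpace A]
    -- `A` is a linear subspace of `ℂ^ℤ`: a continuous linear injection into the product
    (ι : A →ₗ[ℂ] (ℤ → ℂ)) (hcont : Continuous ι)
    -- the finitely supported sequences `φ(ℤ)` form a dense subspace of `A`
    (e : (ℤ →₀ ℂ) →ₗ[ℂ] A) (he : ∀ x : ℤ →₀ ℂ, ι (e x) = x)
    (hdense : Dense (Set.range e))
    -- `S : φ(ℤ) → X` linear with `S(U ∩ φ(ℤ))` dense for every neighborhood `U` of `0`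
    (S : (ℤ →₀ ℂ) →ₗ[ℂ] X)
    (hS : ∀ U ∈ nhds (0 : A), Dense (S '' {x : ℤ →₀ ℂ | e x ∈ U})) :
    (∃ a : A, Dense {x : X | ∃ n : ℕ,
        x = ∑ j ∈ Finset.Icc (-(n : ℤ)) (n : ℤ), ι a j • S (Finsupp.single j 1)}) ∧
    Dense {a : A | Dense {x : X | ∃ n : ℕ,
        x = ∑ j ∈ Finset.Icc (-(n : ℤ)) (n : ℤ), ι a j • S (Finsupp.single j 1)}} ∧
    IsGδ {a : A | Dense {x : X | ∃ n : ℕ,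
        x = ∑ j ∈ Finset.Icc (-(n : ℤ)) (n : ℤ), ι a j • S (Finsupp.single j 1)}} := by
  have hrange (a : A) : {x : X | ∃ n : ℕ,
      x = ∑ j ∈ Finset.Icc (-(n : ℤ)) (n : ℤ), ι a j • S (Finsupp.single j 1)} =
      range fun n => (symmPartialSum S n ∘ ι) a := by
    simp only [range, symmPartialSum, Function.comp_apply, eq_comm]
  simp only [hrange]
  have hT (n : ℕ) : Continuous (symmPartialSum S n ∘ ι) :=
    (continuous_symmPartialSum S n).comp hcont
  have hTe (x : ℤ →₀ ℂ) : ∃ n, (symmPartialSum S n ∘ ι) (e x) = S x := by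
    simpa only [Function.comp_apply, he] using exists_symmPartialSum_eq S x
  have : SeparableSpace X :=
    separableSpace_of_dense_range_finsupp S (by simpa using hS univ Filter.univ_mem)
  have := secondCountableTopology_of_separableSpace X
  have : (uniformity A).IsCountablyGenerated := IsUniformAddGroup.uniformity_countably_generated
  have hD := dense_setOf_dense_range hT fun V hV hVne =>
    dense_iUnion_preimage_of_dense_image_nhds_zero e.toAddMonoidHom S.toAddMonoidHom hTe hdense hS
      hV hVne
  exact ⟨hD.nonempty, hD, isGδ_setOf_dense_range hT⟩

theorem stmt_10 {X : Type*} [AddCommGroup X] [Module ℂ X] [TopologicalSpace X]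
    [IsTopologicalAddGroup X] [ContinuousSMul ℂ X] [TopologicalSpace.MetrizableSpace X]
    {A : Type*} [AddCommGroup A] [Module ℂ A] [UniformSpace A] [IsUniformAddGroup A]
    [ContinuousSMul ℂ A] [CompleteSpace A] [TopologicalSpace.MetrizableSpace A]
    -- `A` is a linear subspace of `ℂ^ℤ`: a continuous linear injection into the product
    (ι : A →ₗ[ℂ] (ℤ → ℂ)) (hinj : Function.Injective ι) (hcont : Continuous ι)
    -- the finitely supported sequences `φ(ℤ)` form a dense subspace of `A`
    (e : (ℤ →₀ ℂ) →ₗ[ℂ] A) (he : ∀ x : ℤ →₀ ℂ, ι (e x) = x)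
    (hdense : Dense (Set.range e))
    -- `S : φ(ℤ) → X` linear with `S(U ∩ φ(ℤ))` dense for every neighborhood `U` of `0`
    (S : (ℤ →₀ ℂ) →ₗ[ℂ] X)
    (hS : ∀ U ∈ nhds (0 : A), Dense (S '' {x : ℤ →₀ ℂ | e x ∈ U})) :
    (∃ a : A, Dense {x : X | ∃ n : ℕ,
        x = ∑ j ∈ Finset.Icc (-(n : ℤ)) (n : ℤ), ι a j • S (Finsupp.single j 1)}) ∧
    Dense {a : A | Dense {x : X | ∃ n : ℕ,
        x = ∑ j ∈ Finset.Icc (-(n : ℤ)) (n : ℤ), ι a j • S (Finsupp.single j 1)}} ∧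
    IsGδ {a : A | Dense {x : X | ∃ n : ℕ,
        x = ∑ j ∈ Finset.Icc (-(n : ℤ)) (n : ℤ), ι a j • S (Finsupp.single j 1)}} :=
  stmt_10_general ι hcont e he hdense S hS
end
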